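/- A bicomplex matrix A ∈ 𝔹ℂ^{n×n} is hyperbolic positive if and only if there exists a hyperbolic positive matrix C ∈ 𝔹ℂ^{n×n} such that A = C². -/

import Mathlib

open Complex Matrix Kronecker BigOperators

open scoped ComplexOrder

/-- Bicomplex numbers, modeled as pairs `(z₁, z₂) ∈ ℂ × ℂ` representing `z₁ + j z₂`.
Addition is the componentwise (Prod) addition. -/
abbrev BC : Type := ℂ × ℂ

noncomputable section

/-- Bicomplex multiplication: `(z₁,z₂)·(w₁,w₂) = (z₁w₁ − z₂w₂, z₁w₂ + z₂w₁)`. -/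
def bcMul (z w : BC) : BC := (z.1 * w.1 - z.2 * w.2, z.1 * w.2 + z.2 * w.1)

/-- The `*`-conjugate `Z* = conj z₁ − j conj z₂`. -/
def bcStar (z : BC) : BC := ((starRingEnd ℂ) z.1, -((starRingEnd ℂ) z.2))

/-- First idempotent component `λ₁ = z₁ − i z₂`. -/
def idem1 (z : BC) : ℂ := z.1 - Complex.I * z.2

/-- Second idempotent component `λ₂ = z₁ + i z₂`. -/
def idem2 (z : BC) : ℂ := z.1 + Complex.I * z.2

/-- Membership in `𝔻⁺`: both idempotent components are nonnegative real numbers. -/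
def inDplus (z : BC) : Prop :=
  (idem1 z).im = 0 ∧ 0 ≤ (idem1 z).re ∧ (idem2 z).im = 0 ∧ 0 ≤ (idem2 z).re

/-- A bicomplex matrix `A = A₁ + j A₂` is a pair of complex matrices. -/
abbrev BCMat (I J : Type) : Type := Matrix I J ℂ × Matrix I J ℂ

/-- Bicomplex matrix multiplication, induced by bicomplex multiplication. -/
def bmul {I J K : Type} [Fintype J] (A : BCMat I J) (B : BCMat J K) : BCMat I K :=
  (A.1 * B.1 - A.2 * B.2, A.1 * B.2 + A.2 * B.1)

/-- `(A*)ᵗ`: the entrywise `*`-conjugate followed by transpose. -/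
def bcStarT {I J : Type} (A : BCMat I J) : BCMat J I := (A.1ᴴ, -(A.2ᴴ))

/-- The `(j,k)` entry of a bicomplex matrix, as a bicomplex number. -/
def bcEntry {I J : Type} (A : BCMat I J) (j : I) (k : J) : BC := (A.1 j k, A.2 j k)

/-- First idempotent component `𝒜₁ = A₁ − i A₂` of a bicomplex matrix. -/
def midem1 {I J : Type} (A : BCMat I J) : Matrix I J ℂ := A.1 - Complex.I • A.2

/-- Second idempotent component `𝒜₂ = A₁ + i A₂` of a bicomplex matrix. -/
def midem2 {I J : Type} (A : BCMat I J) : Matrix I J ℂ := A.1 + Complex.I • A.2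

/-- The bicomplex number `(c*)ᵗ · A · c`. -/
def quadForm {I : Type} [Fintype I] (A : BCMat I I) (c : I → BC) : BC :=
  ∑ j, ∑ k, bcMul (bcStar (c j)) (bcMul (bcEntry A j k) (c k))

/-- `A` is hyperbolic positive if `(c*)ᵗ · A · c ∈ 𝔻⁺` for every bicomplex vector `c`. -/
def HypPos {I : Type} [Fintype I] (A : BCMat I I) : Prop :=
  ∀ c : I → BC, inDplus (quadForm A c)

/-- Bicomplex trace `Tr(A) = Tr(A₁) + j Tr(A₂)`. -/
def bcTrace {I : Type} [Fintype I] (A : BCMat I I) : BC := (A.1.trace, A.2.trace)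

/-- The bicomplex tensor product
`A ⊗ⱼ B = (A₁⊗B₁ − A₂⊗B₂) + j (A₁⊗B₂ + A₂⊗B₁)`. -/
def bkron {I J K L : Type} (A : BCMat I J) (B : BCMat K L) : BCMat (I × K) (J × L) :=
  (A.1 ⊗ₖ B.1 - A.2 ⊗ₖ B.2, A.1 ⊗ₖ B.2 + A.2 ⊗ₖ B.1)

end

/-! Both the product and the `*`-conjugation of bicomplex numbers act componentwise on the
idempotent components `λ₁ = z₁ − i z₂`, `λ₂ = z₁ + i z₂`, so the idempotent components of
`(c*)ᵗ A c` are the complex Hermitian forms `c₁ᴴ 𝒜₁ c₁` and `c₂ᴴ 𝒜₂ c₂`, where `cₖ` collects the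
`k`-th idempotent components of the entries of `c`. Hence `A` is hyperbolic
positive iff both `𝒜₁` and `𝒜₂` are positive semidefinite, and since `A ↦ (𝒜₁, 𝒜₂)` is a
multiplicative bijection, a hyperbolic positive square root of `A` is assembled from the positive
semidefinite square roots of `𝒜₁` and `𝒜₂`. -/

theorem Matrix.posSemidef_iff_forall_dotProduct_mulVec_nonneg {ι : Type*} [Fintype ι]
    {M : Matrix ι ι ℂ} : M.PosSemidef ↔ ∀ x : ι → ℂ, 0 ≤ star x ⬝ᵥ (M *ᵥ x) := by
  refine ⟨fun h => h.dotProduct_mulVec_nonneg, fun h => .of_dotProduct_mulVec_nonneg ?_ h⟩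
  classical
  rw [← isSymmetric_toEuclideanLin_iff, LinearMap.isSymmetric_iff_inner_map_self_real]
  intro v
  rw [Complex.conj_eq_iff_im, EuclideanSpace.inner_eq_star_dotProduct, ofLp_toLpLin, toLin'_apply,
    dotProduct_star, dotProduct_comm, Complex.star_def, Complex.conj_im,
    ← (Complex.nonneg_iff.mp (h v.ofLp)).2, neg_zero]

theorem Matrix.IsHermitian.posSemidef_mul_self {ι R : Type*} [Fintype ι] [Ring R]
    [PartialOrder R] [StarRing R] [StarOrderedRing R] {S : Matrix ι ι R} (hS : S.IsHermitian) :
    (S * S).PosSemidef := by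
  simpa only [hS.eq] using posSemidef_conjTranspose_mul_self S

open scoped MatrixOrder in
theorem Matrix.PosSemidef.exists_posSemidef_mul_self_eq {ι 𝕜 : Type*} [Fintype ι] [RCLike 𝕜]
    {M : Matrix ι ι 𝕜} (hM : M.PosSemidef) : ∃ S : Matrix ι ι 𝕜, S.PosSemidef ∧ S * S = M := by
  classical
  exact ⟨CFC.sqrt M, (CFC.sqrt_nonneg M).posSemidef, CFC.sqrt_mul_sqrt_self M hM.nonneg⟩

section IdempotentComponents

variable {ι κ μ : Type}

lemma idem1_bcMul (z w : BC) : idem1 (bcMul z w) = idem1 z * idem1 w := by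
  simp only [idem1, bcMul]
  linear_combination (-(z.2 * w.2)) * Complex.I_sq

lemma idem2_bcMul (z w : BC) : idem2 (bcMul z w) = idem2 z * idem2 w := by
  simp only [idem2, bcMul]
  linear_combination (-(z.2 * w.2)) * Complex.I_sq

lemma idem1_bcStar (z : BC) : idem1 (bcStar z) = star (idem1 z) := by
  simp only [idem1, bcStar, Complex.star_def, map_sub, map_mul, Complex.conj_I]
  ring

lemma idem2_bcStar (z : BC) : idem2 (bcStar z) = star (idem2 z) := by
  simp only [idem2, bcStar, Complex.star_def, map_add, map_mul, Complex.conj_I]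
  ring

lemma idem1_sum (s : Finset ι) (f : ι → BC) : idem1 (∑ j ∈ s, f j) = ∑ j ∈ s, idem1 (f j) := by
  simp only [idem1, Prod.fst_sum, Prod.snd_sum, Finset.mul_sum, Finset.sum_sub_distrib]

lemma idem2_sum (s : Finset ι) (f : ι → BC) : idem2 (∑ j ∈ s, f j) = ∑ j ∈ s, idem2 (f j) := by
  simp only [idem2, Prod.fst_sum, Prod.snd_sum, Finset.mul_sum, Finset.sum_add_distrib]

lemma inDplus_iff (z : BC) : inDplus z ↔ 0 ≤ idem1 z ∧ 0 ≤ idem2 z := by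
  simp only [inDplus, Complex.nonneg_iff, eq_comm (a := (0 : ℝ))]
  tauto

lemma idem1_bcEntry (A : BCMat ι κ) (j : ι) (k : κ) : idem1 (bcEntry A j k) = midem1 A j k := by
  simp [idem1, bcEntry, midem1]

lemma idem2_bcEntry (A : BCMat ι κ) (j : ι) (k : κ) : idem2 (bcEntry A j k) = midem2 A j k := by
  simp [idem2, bcEntry, midem2]

lemma idem1_quadForm [Fintype ι] (A : BCMat ι ι) (c : ι → BC) :
    idem1 (quadForm A c) = star (idem1 ∘ c) ⬝ᵥ (midem1 A *ᵥ (idem1 ∘ c)) := by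
  simp only [quadForm, idem1_sum, idem1_bcMul, idem1_bcStar, idem1_bcEntry, dotProduct, mulVec,
    Finset.mul_sum, Pi.star_apply, Function.comp_apply]

lemma idem2_quadForm [Fintype ι] (A : BCMat ι ι) (c : ι → BC) :
    idem2 (quadForm A c) = star (idem2 ∘ c) ⬝ᵥ (midem2 A *ᵥ (idem2 ∘ c)) := by
  simp only [quadForm, idem2_sum, idem2_bcMul, idem2_bcStar, idem2_bcEntry, dotProduct, mulVec,
    Finset.mul_sum, Pi.star_apply, Function.comp_apply]

theorem hypPos_iff_posSemidef [Fintype ι] (A : BCMat ι ι) :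
    HypPos A ↔ (midem1 A).PosSemidef ∧ (midem2 A).PosSemidef := by
  simp only [HypPos, inDplus_iff, idem1_quadForm, idem2_quadForm,
    posSemidef_iff_forall_dotProduct_mulVec_nonneg]
  -- a complex vector `x`, viewed as a bicomplex one, has both idempotent components equal to `x`
  refine ⟨fun h => ⟨fun x => ?_, fun x => ?_⟩, fun h c => ⟨h.1 _, h.2 _⟩⟩
  · simpa [Function.comp_def, idem1] using (h fun j => (x j, 0)).1
  · simpa [Function.comp_def, idem2] using (h fun j => (x j, 0)).2

lemma midem1_bmul [Fintype κ] (A : BCMat ι κ) (B : BCMat κ μ) :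
    midem1 (bmul A B) = midem1 A * midem1 B := by
  simp only [midem1, bmul, Matrix.sub_mul, Matrix.mul_sub, Matrix.smul_mul, Matrix.mul_smul,
    smul_add, smul_sub, smul_smul, Complex.I_mul_I, neg_smul, one_smul]
  abel

lemma midem2_bmul [Fintype κ] (A : BCMat ι κ) (B : BCMat κ μ) :
    midem2 (bmul A B) = midem2 A * midem2 B := by
  simp only [midem2, bmul, Matrix.add_mul, Matrix.mul_add, Matrix.smul_mul, Matrix.mul_smul,
    smul_add, smul_smul, Complex.I_mul_I, neg_smul, one_smul]
  abel

noncomputable def bcMatOfMidem (P Q : Matrix ι κ ℂ) : BCMat ι κ :=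
  ((2 : ℂ)⁻¹ • (P + Q), (Complex.I / 2) • (P - Q))

lemma midem1_bcMatOfMidem (P Q : Matrix ι κ ℂ) : midem1 (bcMatOfMidem P Q) = P := by
  simp only [midem1, bcMatOfMidem, smul_smul, mul_div_assoc', Complex.I_mul_I]
  match_scalars <;> ring

lemma midem2_bcMatOfMidem (P Q : Matrix ι κ ℂ) : midem2 (bcMatOfMidem P Q) = Q := by
  simp only [midem2, bcMatOfMidem, smul_smul, mul_div_assoc', Complex.I_mul_I]
  match_scalars <;> ring

lemma bcMatOfMidem_midem (A : BCMat ι κ) : bcMatOfMidem (midem1 A) (midem2 A) = A := by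
  refine Prod.ext ?_ ?_
  · simp only [bcMatOfMidem, midem1, midem2]
    match_scalars <;> ring
  · simp only [bcMatOfMidem, midem1, midem2]
    match_scalars
    · ring
    · linear_combination -Complex.I_sq

lemma bcMat_ext_midem {A B : BCMat ι κ} (h₁ : midem1 A = midem1 B) (h₂ : midem2 A = midem2 B) :
    A = B := by
  rw [← bcMatOfMidem_midem A, ← bcMatOfMidem_midem B, h₁, h₂]

end IdempotentComponents

/-- `A` is hyperbolic positive iff `A = C²` for some hyperbolic
positive matrix `C`. -/
theorem hypPos_iff_sq {n : ℕ} (A : BCMat (Fin n) (Fin n)) :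
    HypPos A ↔ ∃ C : BCMat (Fin n) (Fin n), HypPos C ∧ A = bmul C C := by
  constructor
  · intro hA
    obtain ⟨hA₁, hA₂⟩ := (hypPos_iff_posSemidef A).mp hA
    obtain ⟨S₁, hS₁, hS₁A⟩ := hA₁.exists_posSemidef_mul_self_eq
    obtain ⟨S₂, hS₂, hS₂A⟩ := hA₂.exists_posSemidef_mul_self_eq
    refine ⟨bcMatOfMidem S₁ S₂, ?_, ?_⟩
    · rw [hypPos_iff_posSemidef, midem1_bcMatOfMidem, midem2_bcMatOfMidem]
      exact ⟨hS₁, hS₂⟩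
    · refine bcMat_ext_midem ?_ ?_
      · rw [midem1_bmul, midem1_bcMatOfMidem, hS₁A]
      · rw [midem2_bmul, midem2_bcMatOfMidem, hS₂A]
  · rintro ⟨C, hC, rfl⟩
    obtain ⟨hC₁, hC₂⟩ := (hypPos_iff_posSemidef C).mp hC
    rw [hypPos_iff_posSemidef, midem1_bmul, midem2_bmul]
    exact ⟨hC₁.isHermitian.posSemidef_mul_self, hC₂.isHermitian.posSemidef_mul_self⟩
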